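/- Sylvester's identity: Let q, x be complex numbers with |q| < 1 and x q^j ≠ 1 for every integer j ≥ 1. Then ∑_{k=0}^∞ (−1)^k q^{k(3k+1)/2} x^k (1 − x q^{2k+1}) / ((q;q)_k · (x q^{k+1};q)_∞) = 1, the series converging absolutely. -/

import Mathlib

/-!
Clearing the denominator `(xq;q)_∞`, the claim is that `S(x) = ∑ₖ bₖ(x) (1 - x q^(2k+1))`,
with `bₖ(x) = (-1)^k q^(k(3k+1)/2) x^k (xq;q)_k / (q;q)_k`, equals `(xq;q)_∞`. Termwise,
`bₖ(x) (1 - x q^(2k+1)) - (1 - xq) bₖ(xq) (1 - x q^(2k+2)) = Dₖ - Dₖ₊₁`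
with `Dₖ = (1 - q^k) bₖ(x)` and `D₀ = 0`, so `S(x) = (1 - xq) S(xq)`,
and by iteration `S(x) = (xq;q)_n S(xq^n)`.
Since `bₖ(y) = O(R^k |q|^(k²))` uniformly for `|y| ≤ R`, dominated convergence gives
`S(xq^n) → S(0) = 1`, hence `S(x) = (xq;q)_∞`.
-/

/-- The finite q-Pochhammer symbol `(a; q)_k = ∏_{i=0}^{k-1} (1 - a q^i)`. -/
noncomputable def qPoch (q a : ℂ) (k : ℕ) : ℂ := ∏ i ∈ Finset.range k, (1 - a * q ^ i)

/-- The infinite q-Pochhammer symbol `(a; q)_∞ = ∏_{i=0}^{∞} (1 - a q^i)`. -/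
noncomputable def qPochInf (q a : ℂ) : ℂ := ∏' i : ℕ, (1 - a * q ^ i)

open Finset Filter Topology

theorem summable_pow_mul_pow_mul_self {r : ℝ} (hr : |r| < 1) (R : ℝ) :
    Summable fun k : ℕ => R ^ k * r ^ (k * k) := by
  have hsmall : ∀ᶠ k : ℕ in atTop, ‖R * r ^ k‖ ≤ 1 / 2 := by
    have h : Tendsto (fun k : ℕ => ‖R * r ^ k‖) atTop (𝓝 0) := by
      simpa using ((tendsto_pow_atTop_nhds_zero_of_abs_lt_one hr).const_mul R).norm
    exact h.eventually_le_const (by norm_num)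
  refine summable_geometric_two.of_norm_bounded_eventually_nat (hsmall.mono fun k hk => ?_)
  rw [pow_mul, ← mul_pow, norm_pow]
  exact pow_le_pow_left₀ (norm_nonneg _) hk k

section qPochhammer

variable {q : ℂ}

theorem qPoch_succ (q a : ℂ) (k : ℕ) : qPoch q a (k + 1) = qPoch q a k * (1 - a * q ^ k) :=
  prod_range_succ _ _

theorem qPoch_succ' (q a : ℂ) (k : ℕ) : qPoch q a (k + 1) = (1 - a) * qPoch q (a * q) k := by
  rw [qPoch, prod_range_succ', mul_comm]
  simp only [pow_zero, mul_one, pow_succ, mul_assoc, qPoch]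
  congr 2
  ext i
  ring_nf

theorem qPoch_ne_zero {a : ℂ} (ha : ∀ i, a * q ^ i ≠ 1) (k : ℕ) : qPoch q a k ≠ 0 :=
  prod_ne_zero_iff.2 fun i _ => sub_ne_zero.2 (ha i).symm

theorem norm_mul_pow_le (hq : ‖q‖ ≤ 1) (a : ℂ) (n : ℕ) : ‖a * q ^ n‖ ≤ ‖a‖ := by
  rw [norm_mul, norm_pow]
  exact mul_le_of_le_one_right (norm_nonneg a) (pow_le_one₀ (norm_nonneg q) hq)

theorem norm_one_sub_mul_pow_le (hq : ‖q‖ ≤ 1) (a : ℂ) (n : ℕ) :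
    ‖1 - a * q ^ n‖ ≤ 1 + ‖a‖ :=
  (norm_sub_le _ _).trans (by rw [norm_one]; gcongr; exact norm_mul_pow_le hq a n)

theorem norm_qPoch_le (hq : ‖q‖ < 1) (a : ℂ) (k : ℕ) :
    ‖qPoch q a k‖ ≤ Real.exp (‖a‖ / (1 - ‖q‖)) := by
  have hprod := (range k).norm_prod_one_add_sub_one_le fun i => -(a * q ^ i)
  simp only [← sub_eq_add_neg, norm_neg, norm_mul, norm_pow, ← mul_sum] at hprod
  have hgeom : ‖a‖ * ∑ i ∈ range k, ‖q‖ ^ i ≤ ‖a‖ / (1 - ‖q‖) := by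
    rw [div_eq_mul_one_div]
    gcongr
    simpa using geom_sum_Ico_le_of_lt_one (m := 0) (n := k) (norm_nonneg q) hq
  calc ‖qPoch q a k‖ ≤ ‖qPoch q a k - 1‖ + 1 := by
        simpa using norm_le_norm_sub_add _ (1 : ℂ)
    _ ≤ Real.exp (‖a‖ / (1 - ‖q‖)) := by
      have := Real.exp_le_exp.2 hgeom
      rw [qPoch]
      linarith

theorem self_mul_pow_ne_one (hq : ‖q‖ < 1) (i : ℕ) : q * q ^ i ≠ 1 := by
  intro h
  have := norm_mul_pow_le hq.le q i
  rw [h, norm_one] at this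
  linarith

theorem summable_norm_mul_pow (hq : ‖q‖ < 1) (a : ℂ) :
    Summable fun i : ℕ => ‖a * q ^ i‖ := by
  simpa only [norm_mul, norm_pow] using
    (summable_geometric_of_lt_one (norm_nonneg q) hq).mul_left ‖a‖

theorem hasProd_qPochInf (hq : ‖q‖ < 1) (a : ℂ) :
    HasProd (fun i : ℕ => 1 - a * q ^ i) (qPochInf q a) := by
  have := multipliable_one_add_of_summable (f := fun i : ℕ => -(a * q ^ i))
    (by simpa only [norm_neg] using summable_norm_mul_pow hq a)
  simp only [← sub_eq_add_neg] at this
  exact this.hasProd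

theorem tendsto_qPoch (hq : ‖q‖ < 1) (a : ℂ) :
    Tendsto (qPoch q a) atTop (𝓝 (qPochInf q a)) := by
  unfold qPoch
  exact (hasProd_qPochInf hq a).tendsto_prod_nat

theorem qPoch_mul_qPochInf (hq : ‖q‖ < 1) (a : ℂ) (k : ℕ) :
    qPoch q a k * qPochInf q (a * q ^ k) = qPochInf q a := by
  have hshift : Multipliable fun i : ℕ => 1 - a * q ^ (i + k) := by
    refine (hasProd_qPochInf hq (a * q ^ k)).multipliable.congr fun i => ?_
    rw [pow_add, mul_assoc, mul_comm (q ^ k)]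
  rw [qPochInf, qPochInf, qPoch,
    ← Multipliable.prod_mul_tprod_nat_mul' (f := fun i => 1 - a * q ^ i) hshift]
  congr 1
  exact tprod_congr fun i => by ring

theorem qPochInf_ne_zero (hq : ‖q‖ < 1) {a : ℂ} (ha : ∀ i, a * q ^ i ≠ 1) :
    qPochInf q a ≠ 0 := by
  have := tprod_one_add_ne_zero_of_summable (f := fun i : ℕ => -(a * q ^ i))
    (fun i => by simpa [← sub_eq_add_neg, sub_eq_zero] using (ha i).symm)
    (by simpa only [norm_neg] using summable_norm_mul_pow hq a)
  simpa only [← sub_eq_add_neg, qPochInf] using this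

theorem exists_norm_inv_qPoch_le (hq : ‖q‖ < 1) {a : ℂ} (ha : ∀ i, a * q ^ i ≠ 1) :
    ∃ B, ∀ k, ‖(qPoch q a k)⁻¹‖ ≤ B := by
  have h := (tendsto_qPoch hq a).inv₀ (qPochInf_ne_zero hq ha)
  obtain ⟨B, hB⟩ := isBounded_iff_forall_norm_le.1 (Metric.isBounded_range_of_tendsto _ h)
  exact ⟨B, fun k => hB _ ⟨k, rfl⟩⟩

end qPochhammer

section Sylvester

variable {q : ℂ}

theorem pentagonal_succ (k : ℕ) :
    (k + 1) * (3 * (k + 1) + 1) / 2 = k * (3 * k + 1) / 2 + (3 * k + 2) := by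
  rw [show (k + 1) * (3 * (k + 1) + 1) = k * (3 * k + 1) + (3 * k + 2) * 2 by ring,
    Nat.add_mul_div_right _ _ two_pos]

theorem mul_self_le_pentagonal (k : ℕ) : k * k ≤ k * (3 * k + 1) / 2 :=
  (Nat.le_div_iff_mul_le two_pos).2 (by nlinarith)

noncomputable def sylvesterBase (q y : ℂ) (k : ℕ) : ℂ :=
  (-1) ^ k * q ^ (k * (3 * k + 1) / 2) * y ^ k * qPoch q (y * q) k / qPoch q q k

noncomputable def sylvesterSum (q y : ℂ) : ℂ :=
  ∑' k, sylvesterBase q y k * (1 - y * q ^ (2 * k + 1))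

theorem continuous_sylvesterBase (q : ℂ) (k : ℕ) : Continuous fun y => sylvesterBase q y k := by
  unfold sylvesterBase qPoch
  fun_prop

theorem exists_norm_sylvesterBase_le (hq : ‖q‖ < 1) (R : ℝ) :
    ∃ C, ∀ y : ℂ, ‖y‖ ≤ R → ∀ k,
      ‖sylvesterBase q y k‖ ≤ C * (R ^ k * ‖q‖ ^ (k * k)) := by
  obtain ⟨B, hB⟩ := exists_norm_inv_qPoch_le hq (self_mul_pow_ne_one hq)
  refine ⟨Real.exp (R / (1 - ‖q‖)) * B, fun y hy k => ?_⟩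
  have hyq : ‖y * q‖ ≤ R := by simpa using (norm_mul_pow_le hq.le y 1).trans hy
  have hexp : ‖q‖ ^ (k * (3 * k + 1) / 2) ≤ ‖q‖ ^ (k * k) :=
    pow_le_pow_of_le_one (norm_nonneg q) hq.le (mul_self_le_pentagonal k)
  have hpoch : ‖qPoch q (y * q) k‖ ≤ Real.exp (R / (1 - ‖q‖)) :=
    (norm_qPoch_le hq _ k).trans (Real.exp_le_exp.2 (by gcongr))
  have hR : 0 ≤ R := (norm_nonneg y).trans hy
  rw [sylvesterBase, div_eq_mul_inv, norm_mul, norm_mul, norm_mul, norm_mul, norm_pow, norm_pow,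
    norm_pow, norm_neg, norm_one, one_pow, one_mul]
  calc _ ≤ ‖q‖ ^ (k * k) * R ^ k * Real.exp (R / (1 - ‖q‖)) * B := by
        gcongr
        exact hB k
    _ = Real.exp (R / (1 - ‖q‖)) * B * (R ^ k * ‖q‖ ^ (k * k)) := by ring

theorem summable_norm_sylvesterBase_mul (hq : ‖q‖ < 1) (y : ℂ) {c : ℕ → ℂ} {W : ℝ}
    (hc : ∀ k, ‖c k‖ ≤ W) : Summable fun k => ‖sylvesterBase q y k * c k‖ := by
  obtain ⟨C, hC⟩ := exists_norm_sylvesterBase_le hq ‖y‖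
  have hq' : |‖q‖| < 1 := by rwa [abs_norm]
  have hbound := ((summable_pow_mul_pow_mul_self hq' ‖y‖).mul_left C).mul_right W
  refine hbound.of_nonneg_of_le (fun k => norm_nonneg _) fun k => ?_
  rw [norm_mul]
  exact mul_le_mul (hC y le_rfl k) (hc k) (norm_nonneg _) ((norm_nonneg _).trans (hC y le_rfl k))

theorem sylvesterBase_mul_one_sub (q y : ℂ) (k : ℕ) :
    sylvesterBase q (y * q) k * (1 - y * q) =
      q ^ k * (1 - y * q * q ^ k) * sylvesterBase q y k := by
  have hpoch : qPoch q (y * q * q) k * (1 - y * q) = qPoch q (y * q) k * (1 - y * q * q ^ k) := by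
    rw [← qPoch_succ, qPoch_succ', mul_comm]
  simp only [sylvesterBase, mul_pow, div_mul_eq_mul_div]
  rw [mul_assoc _ (qPoch q (y * q * q) k), hpoch]
  ring

theorem sylvesterBase_succ_mul (hq : ‖q‖ < 1) (y : ℂ) (k : ℕ) :
    sylvesterBase q y (k + 1) * (1 - q ^ (k + 1)) =
      -(q ^ (3 * k + 2) * y * (1 - y * q * q ^ k)) * sylvesterBase q y k := by
  have hQ : qPoch q q k ≠ 0 := qPoch_ne_zero (self_mul_pow_ne_one hq) k
  have hq' : 1 - q * q ^ k ≠ 0 := sub_ne_zero.2 (self_mul_pow_ne_one hq k).symm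
  simp only [sylvesterBase, pentagonal_succ, qPoch_succ]
  field_simp
  ring

theorem sylvesterBase_telescope (hq : ‖q‖ < 1) (y : ℂ) (k : ℕ) :
    sylvesterBase q y k * (1 - y * q ^ (2 * k + 1)) -
        (1 - y * q) * (sylvesterBase q (y * q) k * (1 - y * q * q ^ (2 * k + 1))) =
      sylvesterBase q y k * (1 - q ^ k) - sylvesterBase q y (k + 1) * (1 - q ^ (k + 1)) := by
  rw [sylvesterBase_succ_mul hq]
  linear_combination -(1 - y * q * q ^ (2 * k + 1)) * sylvesterBase_mul_one_sub q y k

theorem sylvesterSum_eq_mul_sylvesterSum (hq : ‖q‖ < 1) (y : ℂ) :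
    sylvesterSum q y = (1 - y * q) * sylvesterSum q (y * q) := by
  have hW := norm_one_sub_mul_pow_le hq.le
  have hT := (summable_norm_sylvesterBase_mul hq y fun k => hW y (2 * k + 1)).of_norm
  have hT' := (summable_norm_sylvesterBase_mul hq (y * q) fun k => hW (y * q) (2 * k + 1)).of_norm
  have hD := (summable_norm_sylvesterBase_mul hq y fun k => by simpa using hW 1 k).of_norm
  rw [← sub_eq_zero, sylvesterSum, sylvesterSum, ← tsum_mul_left,
    ← hT.tsum_sub (hT'.mul_left _)]
  simp_rw [sylvesterBase_telescope hq]
  rw [hD.tsum_sub ((summable_nat_add_iff 1).2 hD), hD.tsum_eq_zero_add]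
  simp

theorem sylvesterSum_eq_qPoch_mul (hq : ‖q‖ < 1) (x : ℂ) (n : ℕ) :
    sylvesterSum q x = qPoch q (x * q) n * sylvesterSum q (x * q ^ n) := by
  induction n with
  | zero => simp [qPoch]
  | succ n ih =>
    rw [ih, sylvesterSum_eq_mul_sylvesterSum hq, qPoch_succ, mul_assoc x, ← pow_succ]
    ring

theorem tendsto_sylvesterSum (hq : ‖q‖ < 1) (x : ℂ) :
    Tendsto (fun n => sylvesterSum q (x * q ^ n)) atTop (𝓝 1) := by
  obtain ⟨C, hC⟩ := exists_norm_sylvesterBase_le hq ‖x‖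
  have hzero : Tendsto (fun n => x * q ^ n) atTop (𝓝 0) := by
    simpa using (tendsto_pow_atTop_nhds_zero_of_norm_lt_one hq).const_mul x
  have hsum : ∑' k, sylvesterBase q 0 k * (1 - 0 * q ^ (2 * k + 1)) = 1 := by
    rw [tsum_eq_single 0 fun k hk => by simp [sylvesterBase, hk]]
    simp [sylvesterBase, qPoch]
  rw [← hsum]
  refine tendsto_tsum_of_dominated_convergence
    (bound := fun k => C * (‖x‖ ^ k * ‖q‖ ^ (k * k)) * (1 + ‖x‖)) ?_ (fun k => ?_)
    (Eventually.of_forall fun n k => ?_)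
  · have hq' : |‖q‖| < 1 := by rwa [abs_norm]
    exact ((summable_pow_mul_pow_mul_self hq' ‖x‖).mul_left C).mul_right _
  · have hcont : Continuous fun y => sylvesterBase q y k * (1 - y * q ^ (2 * k + 1)) :=
      (continuous_sylvesterBase q k).mul (by fun_prop)
    exact (hcont.tendsto 0).comp hzero
  · have hxn := norm_mul_pow_le hq.le x n
    rw [norm_mul]
    exact mul_le_mul (hC _ hxn k) ((norm_one_sub_mul_pow_le hq.le _ _).trans (by gcongr))
      (norm_nonneg _) ((norm_nonneg _).trans (hC _ hxn k))

theorem sylvesterSum_eq_qPochInf (hq : ‖q‖ < 1) (x : ℂ) :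
    sylvesterSum q x = qPochInf q (x * q) := by
  have h := (tendsto_qPoch hq (x * q)).mul (tendsto_sylvesterSum hq x)
  rw [mul_one] at h
  exact tendsto_nhds_unique (tendsto_const_nhds.congr (sylvesterSum_eq_qPoch_mul hq x)) h

end Sylvester

/-- Sylvester's identity. -/
theorem sylvester_identity (q x : ℂ) (hq : ‖q‖ < 1)
    (hx : ∀ j : ℕ, 1 ≤ j → x * q ^ j ≠ 1) :
    Summable (fun k : ℕ =>
      ‖(-1 : ℂ) ^ k * q ^ (k * (3 * k + 1) / 2) * x ^ k * (1 - x * q ^ (2 * k + 1)) /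
        (qPoch q q k * qPochInf q (x * q ^ (k + 1)))‖) ∧
    (∑' k : ℕ, (-1 : ℂ) ^ k * q ^ (k * (3 * k + 1) / 2) * x ^ k * (1 - x * q ^ (2 * k + 1)) /
        (qPoch q q k * qPochInf q (x * q ^ (k + 1)))) = 1 := by
  have hxq : ∀ i, x * q * q ^ i ≠ 1 := fun i => by
    rw [mul_assoc, ← pow_succ']
    exact hx _ i.succ_pos
  have hterm : ∀ k : ℕ,
      (-1 : ℂ) ^ k * q ^ (k * (3 * k + 1) / 2) * x ^ k * (1 - x * q ^ (2 * k + 1)) /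
        (qPoch q q k * qPochInf q (x * q ^ (k + 1))) =
      sylvesterBase q x k * (1 - x * q ^ (2 * k + 1)) / qPochInf q (x * q) := fun k => by
    have hQ : qPoch q q k ≠ 0 := qPoch_ne_zero (self_mul_pow_ne_one hq) k
    rw [← qPoch_mul_qPochInf hq (x * q) k, sylvesterBase, mul_assoc x q, ← pow_succ']
    field_simp [qPoch_ne_zero hxq k]
  simp_rw [hterm]
  refine ⟨?_, ?_⟩
  · simp_rw [norm_div]
    exact (summable_norm_sylvesterBase_mul hq x
      fun k => norm_one_sub_mul_pow_le hq.le x (2 * k + 1)).div_const _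
  · rw [tsum_div_const, ← sylvesterSum, sylvesterSum_eq_qPochInf hq x,
      div_self (qPochInf_ne_zero hq hxq)]
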